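/- Let t* ∈ (π/2, π) be the unique zero of t ↦ W(−t,t). Then the function t ↦ β(0,t) (the terminal chord angle of R restricted to [0,t]) is strictly increasing on (0, t*], strictly decreasing on [t*, π], and satisfies β(0, t*) > π/2 and β(0, π) = π/2. Consequently there exists a unique t̄ ∈ (0, t*) with β(0, t̄) = π/2, with β(0,t) < π/2 for 0 < t < t̄ and β(0,t) > π/2 for t̄ < t < π. -/

import Mathlib

/-!
Since R(0) = 0, β(0,t) = arg (R'(t)/R(t)), so β' = Im (R''/R') − Im (R'/R). The first term is
2 sin t / √(1 + sin² t), the turning rate of the tangent R'(t) = cos t + i ξ'(t); the second is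
(sin t ξ' − ξ cos t) / |R|², positive on (0, π]. Together
β'(t) = sin t · ξ(t) · W(−t,t) / (2 √(1 + sin² t) |R(t)|²).
On (0, π/2] every term of W(−t,t) is positive and on [π/2, π) it is strictly decreasing, so it
changes sign exactly at t*. Finally R'(π) = −1 and R(π) = i ξ(π) give β(0,π) = π/2, while
β(0,π/2) < π/2, and t̄ comes from the intermediate value theorem on [π/2, t*].
-/

open Real Complex Set

noncomputable def xi (t : ℝ) : ℝ :=
  ∫ τ in (0:ℝ)..t, Real.sin τ ^ 2 / Real.sqrt (1 + Real.sin τ ^ 2)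

noncomputable def R (t : ℝ) : ℂ := (Real.sin t : ℂ) + Complex.I * (xi t : ℂ)

noncomputable def betaAng (t₁ t₂ : ℝ) : ℝ := Complex.arg (deriv R t₂ / (R t₂ - R t₁))

noncomputable def W (t₁ t₂ : ℝ) : ℝ :=
  2 * (xi t₂ - xi t₁) + (Real.sin t₂ - Real.sin t₁) ^ 2 / (xi t₂ - xi t₁)
    + Real.cos t₂ * Real.sqrt (1 + Real.sin t₂ ^ 2) / Real.sin t₂
    - Real.cos t₁ * Real.sqrt (1 + Real.sin t₁ ^ 2) / Real.sin t₁

theorem existsUnique_eq_of_strictMonoOn_of_strictAntiOn {f : ℝ → ℝ} {a m b s y : ℝ}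
    (hmono : StrictMonoOn f (Ioc a m)) (hanti : StrictAntiOn f (Icc m b)) (hs : s ∈ Ioc a m)
    (hcont : ContinuousOn f (Icc s m)) (hfs : f s < y) (hmb : m < b) (hfb : f b = y) :
    ∃! x, x ∈ Ioo a m ∧ f x = y ∧
      (∀ t, a < t → t < x → f t < y) ∧ (∀ t, x < t → t < b → f t > y) := by
  have hfm : y < f m := hfb ▸ hanti ⟨le_rfl, hmb.le⟩ ⟨hmb.le, le_rfl⟩ hmb
  obtain ⟨x, hx, hfx⟩ := intermediate_value_Ioo hs.2 hcont ⟨hfs, hfm⟩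
  have hxm : x ∈ Ioc a m := ⟨hs.1.trans hx.1, hx.2.le⟩
  refine ⟨x, ⟨⟨hxm.1, hx.2⟩, hfx, fun t ht htx => ?_, fun t hxt htb => ?_⟩, ?_⟩
  · exact hfx ▸ hmono ⟨ht, htx.le.trans hxm.2⟩ hxm htx
  · rcases le_or_gt t m with htm | hmt
    · exact hfx ▸ hmono hxm ⟨hxm.1.trans hxt, htm⟩ hxt
    · exact hfb ▸ hanti ⟨hmt.le, htb.le⟩ ⟨hmb.le, le_rfl⟩ htb
  · rintro z ⟨hz, hfz, -, -⟩
    exact hmono.injOn ⟨hz.1, hz.2.le⟩ hxm (hfz.trans hfx.symm)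

theorem HasDerivAt.arg_real {f : ℝ → ℂ} {f' : ℂ} {x : ℝ} (hf : HasDerivAt f f' x)
    (hx : f x ∈ slitPlane) : HasDerivAt (fun t => arg (f t)) (f' / f x).im x := by
  have := imCLM.hasFDerivAt.comp_hasDerivAt x (hf.clog_real hx)
  simpa only [Function.comp_def, imCLM_apply, log_im] using this

lemma im_div_add_I_mul (a b c d : ℝ) :
    ((a + I * b : ℂ) / (c + I * d)).im = (b * c - a * d) / (c ^ 2 + d ^ 2) := by
  simp only [div_im, add_im, ofReal_im, mul_im, I_re, mul_zero, I_im, ofReal_re, one_mul, zero_add,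
    add_re, mul_re, zero_mul, sub_self, add_zero, normSq_apply]
  ring

lemma re_div_add_I_mul (a b c d : ℝ) :
    ((a + I * b : ℂ) / (c + I * d)).re = (a * c + b * d) / (c ^ 2 + d ^ 2) := by
  simp only [div_re, add_re, ofReal_re, mul_re, I_re, zero_mul, I_im, ofReal_im, mul_zero, sub_self,
    add_zero, normSq_apply, add_im, mul_im, one_mul, zero_add]
  ring

noncomputable def rho (t : ℝ) : ℝ := √(1 + Real.sin t ^ 2)

noncomputable def dxi (t : ℝ) : ℝ := Real.sin t ^ 2 / rho t

noncomputable def ddxi (t : ℝ) : ℝ := Real.sin t * Real.cos t * (2 + Real.sin t ^ 2) / rho t ^ 3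

lemma rho_pos (t : ℝ) : 0 < rho t := Real.sqrt_pos.2 (by positivity)

lemma rho_sq (t : ℝ) : rho t ^ 2 = 1 + Real.sin t ^ 2 := Real.sq_sqrt (by positivity)

lemma continuous_rho : Continuous rho := by
  unfold rho; fun_prop

lemma continuous_dxi : Continuous dxi :=
  (Real.continuous_sin.pow 2).div continuous_rho fun t => (rho_pos t).ne'

lemma hasDerivAt_sin_sq (t : ℝ) :
    HasDerivAt (fun u => Real.sin u ^ 2) (2 * Real.sin t * Real.cos t) t := by
  simpa using (Real.hasDerivAt_sin t).fun_pow 2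

lemma hasDerivAt_rho (t : ℝ) : HasDerivAt rho (Real.sin t * Real.cos t / rho t) t := by
  have := ((hasDerivAt_sin_sq t).const_add 1).sqrt (rho_sq t ▸ (pow_pos (rho_pos t) 2).ne')
  refine this.congr_deriv ?_
  have := rho_pos t
  rw [← rho]; field_simp

lemma hasDerivAt_dxi (t : ℝ) : HasDerivAt dxi (ddxi t) t := by
  refine ((hasDerivAt_sin_sq t).div (hasDerivAt_rho t) (rho_pos t).ne').congr_deriv ?_
  have := rho_pos t
  rw [ddxi]
  field_simp
  linear_combination (2 * Real.sin t * Real.cos t) * rho_sq t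

lemma hasDerivAt_xi (t : ℝ) : HasDerivAt xi (dxi t) t := by
  unfold xi
  exact intervalIntegral.integral_hasDerivAt_right (continuous_dxi.intervalIntegrable 0 t)
    continuous_dxi.aestronglyMeasurable.stronglyMeasurableAtFilter continuous_dxi.continuousAt

lemma xi_zero : xi 0 = 0 := intervalIntegral.integral_same

lemma xi_neg (t : ℝ) : xi (-t) = -xi t := by
  have := intervalIntegral.integral_comp_neg (a := 0) (b := t)
    fun τ => Real.sin τ ^ 2 / √(1 + Real.sin τ ^ 2)
  simp only [Real.sin_neg, neg_sq, neg_zero] at this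
  rw [xi, xi, this, intervalIntegral.integral_symm]

lemma xi_pos {t : ℝ} (h0 : 0 < t) (hπ : t ≤ π) : 0 < xi t := by
  refine intervalIntegral.intervalIntegral_pos_of_pos_on
    (continuous_dxi.intervalIntegrable 0 t) (fun x hx => ?_) h0
  have := Real.sin_pos_of_pos_of_lt_pi hx.1 (hx.2.trans_le hπ)
  positivity

lemma cos_sq_add_dxi_sq (t : ℝ) : Real.cos t ^ 2 + dxi t ^ 2 = 1 / rho t ^ 2 := by
  have := rho_pos t
  rw [dxi]
  field_simp
  linear_combination Real.cos t ^ 2 * rho_sq t + (1 + Real.sin t ^ 2) * Real.sin_sq_add_cos_sq t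

lemma R_zero : R 0 = 0 := by simp [R, xi_zero]

lemma hasDerivAt_R (t : ℝ) : HasDerivAt R (Real.cos t + I * dxi t) t :=
  (Real.hasDerivAt_sin t).ofReal_comp.add ((hasDerivAt_xi t).ofReal_comp.const_mul I)

lemma deriv_R (t : ℝ) : deriv R t = Real.cos t + I * dxi t := (hasDerivAt_R t).deriv

lemma hasDerivAt_deriv_R (t : ℝ) :
    HasDerivAt (deriv R) ((-Real.sin t : ℝ) + I * ddxi t) t := by
  refine HasDerivAt.congr_of_eventuallyEq ?_ (.of_forall deriv_R)
  exact (Real.hasDerivAt_cos t).ofReal_comp.add ((hasDerivAt_dxi t).ofReal_comp.const_mul I)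

lemma deriv_R_ne_zero (t : ℝ) : deriv R t ≠ 0 := by
  have h : 0 < normSq (deriv R t) := by
    rw [deriv_R, mul_comm I, normSq_add_mul_I, cos_sq_add_dxi_sq]
    have := rho_pos t
    positivity
  exact normSq_pos.1 h

lemma R_ne_zero {t : ℝ} (hx : xi t ≠ 0) : R t ≠ 0 := fun h => hx (by simpa [R] using congrArg im h)

lemma betaAng_zero_left (t : ℝ) : betaAng 0 t = arg (deriv R t / R t) := by
  rw [betaAng, R_zero, sub_zero]

lemma re_deriv_R_div_R (t : ℝ) :
    (deriv R t / R t).re = (Real.cos t * Real.sin t + dxi t * xi t) / (Real.sin t ^ 2 + xi t ^ 2) := by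
  rw [deriv_R, R, re_div_add_I_mul]

noncomputable def crossR (t : ℝ) : ℝ := Real.sin t * dxi t - xi t * Real.cos t

lemma im_deriv_R_div_R (t : ℝ) :
    (deriv R t / R t).im = crossR t / (Real.sin t ^ 2 + xi t ^ 2) := by
  rw [deriv_R, R, im_div_add_I_mul, crossR]
  ring

lemma im_deriv2_R_div_deriv_R (t : ℝ) :
    (((-Real.sin t : ℝ) + I * ddxi t) / deriv R t).im = 2 * Real.sin t / rho t := by
  rw [deriv_R, im_div_add_I_mul, cos_sq_add_dxi_sq, dxi, ddxi]
  have := rho_pos t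
  field_simp
  linear_combination Real.sin t ^ 3 * rho_sq t
    + Real.sin t * (2 + Real.sin t ^ 2) * Real.sin_sq_add_cos_sq t

lemma crossR_zero : crossR 0 = 0 := by simp [crossR, xi_zero]

lemma hasDerivAt_crossR (t : ℝ) :
    HasDerivAt crossR (Real.sin t * (ddxi t + xi t)) t := by
  refine (((Real.hasDerivAt_sin t).mul (hasDerivAt_dxi t)).sub
    ((hasDerivAt_xi t).mul (Real.hasDerivAt_cos t))).congr_deriv ?_
  rw [dxi]
  ring

lemma continuous_crossR : Continuous crossR :=
  continuous_iff_continuousAt.2 fun t => (hasDerivAt_crossR t).continuousAt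

lemma crossR_pos {t : ℝ} (h0 : 0 < t) (hπ : t ≤ π) : 0 < crossR t := by
  rcases le_or_gt t (π / 2) with ht | ht
  · have hmono : StrictMonoOn crossR (Icc 0 (π / 2)) := by
      refine strictMonoOn_of_deriv_pos (convex_Icc _ _) continuous_crossR.continuousOn ?_
      intro u hu
      rw [interior_Icc] at hu
      obtain ⟨hu0, hu⟩ := hu
      have hs := Real.sin_pos_of_pos_of_lt_pi hu0 (by linarith [pi_pos])
      have hc := Real.cos_pos_of_mem_Ioo ⟨by linarith, hu⟩
      have := xi_pos hu0 (by linarith [pi_pos])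
      have := rho_pos u
      rw [(hasDerivAt_crossR u).deriv, ddxi]
      positivity
    simpa [crossR_zero] using hmono ⟨le_rfl, by positivity⟩ ⟨h0.le, ht⟩ h0
  · have hs := Real.sin_nonneg_of_nonneg_of_le_pi h0.le hπ
    have hc := Real.cos_neg_of_pi_div_two_lt_of_lt ht (by linarith [pi_pos])
    have := xi_pos h0 hπ
    have := mul_nonneg hs (div_nonneg (sq_nonneg (Real.sin t)) (rho_pos t).le)
    rw [crossR, dxi]
    nlinarith

lemma hasDerivAt_betaAng {t : ℝ} (h0 : 0 < t) (hπ : t ≤ π) :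
    HasDerivAt (fun u => betaAng 0 u)
      ((Real.sin t ^ 3 + 2 * Real.sin t * xi t ^ 2 + xi t * Real.cos t * rho t)
        / (rho t * (Real.sin t ^ 2 + xi t ^ 2))) t := by
  have hx := (xi_pos h0 hπ).ne'
  have hR := R_ne_zero hx
  have hR' := deriv_R_ne_zero t
  have hz : deriv R t / R t ∈ slitPlane := by
    rw [mem_slitPlane_iff, im_deriv_R_div_R]
    exact Or.inr (div_pos (crossR_pos h0 hπ) (by positivity)).ne'
  have hβ := ((hasDerivAt_deriv_R t).div (hasDerivAt_R t) hR).arg_real hz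
  rw [funext betaAng_zero_left]
  refine hβ.congr_deriv ?_
  have hlogDeriv : ∀ a : ℂ, (a * R t - deriv R t * deriv R t) / R t ^ 2 / (deriv R t / R t)
      = a / deriv R t - deriv R t / R t := by
    intro a; field_simp
  rw [← deriv_R, Pi.div_apply, hlogDeriv, sub_im, im_deriv2_R_div_deriv_R, im_deriv_R_div_R,
    crossR, dxi]
  have := rho_pos t
  field_simp
  ring

noncomputable def halfW (t : ℝ) : ℝ :=
  2 * xi t + Real.sin t ^ 2 / xi t + Real.cos t * rho t / Real.sin t

lemma W_neg_self (t : ℝ) : W (-t) t = 2 * halfW t := by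
  simp only [W, halfW, rho, xi_neg, Real.sin_neg, Real.cos_neg, neg_sq]
  ring

lemma sin_mul_xi_mul_halfW {t : ℝ} (hs : Real.sin t ≠ 0) (hx : xi t ≠ 0) :
    Real.sin t * xi t * halfW t
      = Real.sin t ^ 3 + 2 * Real.sin t * xi t ^ 2 + xi t * Real.cos t * rho t := by
  rw [halfW]
  field_simp
  ring

lemma halfW_pos {t : ℝ} (h0 : 0 < t) (ht : t ≤ π / 2) : 0 < halfW t := by
  have := xi_pos h0 (by linarith [pi_pos])
  have := Real.sin_pos_of_pos_of_lt_pi h0 (by linarith [pi_pos])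
  have := Real.cos_nonneg_of_mem_Icc ⟨by linarith [pi_pos], ht⟩
  have := rho_pos t
  rw [halfW]
  positivity

lemma hasDerivAt_halfW {t : ℝ} (hs : Real.sin t ≠ 0) (hx : xi t ≠ 0) :
    HasDerivAt halfW (2 * Real.sin t * Real.cos t / xi t
      - Real.sin t ^ 4 / (xi t ^ 2 * rho t) - Real.cos t ^ 2 * rho t / Real.sin t ^ 2) t := by
  refine ((((hasDerivAt_xi t).const_mul 2).add ((hasDerivAt_sin_sq t).div (hasDerivAt_xi t) hx)).add
    (((Real.hasDerivAt_cos t).mul (hasDerivAt_rho t)).div (Real.hasDerivAt_sin t) hs)).congr_deriv ?_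
  have := rho_pos t
  rw [dxi, Pi.mul_apply]
  field_simp
  linear_combination xi t ^ 2 * Real.sin t ^ 2 * (Real.sin_sq_add_cos_sq t - rho_sq t)

lemma strictAntiOn_halfW : StrictAntiOn halfW (Ico (π / 2) π) := by
  have hpos : ∀ t ∈ Ico (π / 2) π, 0 < Real.sin t ∧ 0 < xi t := fun t ht =>
    ⟨Real.sin_pos_of_pos_of_lt_pi (by linarith [pi_pos, ht.1]) ht.2,
      xi_pos (by linarith [pi_pos, ht.1]) ht.2.le⟩
  refine strictAntiOn_of_deriv_neg (convex_Ico _ _) (fun t ht => ?_) (fun t ht => ?_)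
  · exact (hasDerivAt_halfW (hpos t ht).1.ne' (hpos t ht).2.ne').continuousAt.continuousWithinAt
  · rw [interior_Ico] at ht
    obtain ⟨hs, hx⟩ := hpos t (Ioo_subset_Ico_self ht)
    have hc := Real.cos_neg_of_pi_div_two_lt_of_lt ht.1 (by linarith [ht.2, pi_pos])
    have := rho_pos t
    have := hc.ne
    rw [(hasDerivAt_halfW hs.ne' hx.ne').deriv]
    have : 2 * Real.sin t * Real.cos t / xi t < 0 :=
      div_neg_of_neg_of_pos (by nlinarith) hx
    have : 0 < Real.sin t ^ 4 / (xi t ^ 2 * rho t) := by positivity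
    have : 0 < Real.cos t ^ 2 * rho t / Real.sin t ^ 2 := by positivity
    linarith

lemma halfW_pos_of_lt {t₀ t : ℝ} (ht₀ : t₀ ∈ Ioo (π / 2) π) (hW : halfW t₀ = 0)
    (h0 : 0 < t) (ht : t < t₀) : 0 < halfW t := by
  rcases le_or_gt t (π / 2) with h | h
  · exact halfW_pos h0 h
  · exact hW ▸ strictAntiOn_halfW ⟨h.le, ht.trans ht₀.2⟩ ⟨ht₀.1.le, ht₀.2⟩ ht

lemma halfW_neg_of_gt {t₀ t : ℝ} (ht₀ : t₀ ∈ Ioo (π / 2) π) (hW : halfW t₀ = 0)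
    (ht : t₀ < t) (hπ : t < π) : halfW t < 0 :=
  hW ▸ strictAntiOn_halfW ⟨ht₀.1.le, ht₀.2⟩ ⟨by linarith [ht₀.1], hπ⟩ ht

lemma continuousOn_betaAng : ContinuousOn (fun t => betaAng 0 t) (Ioc 0 π) :=
  fun _ ht => (hasDerivAt_betaAng ht.1 ht.2).continuousAt.continuousWithinAt

lemma deriv_betaAng {t : ℝ} (h0 : 0 < t) (hπ : t < π) :
    deriv (fun u => betaAng 0 u) t
      = Real.sin t * xi t * halfW t / (rho t * (Real.sin t ^ 2 + xi t ^ 2)) := by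
  rw [(hasDerivAt_betaAng h0 hπ.le).deriv, sin_mul_xi_mul_halfW
    (Real.sin_pos_of_pos_of_lt_pi h0 hπ).ne' (xi_pos h0 hπ.le).ne']

lemma betaAng_strictMonoOn {t₀ : ℝ} (ht₀ : t₀ ∈ Ioo (π / 2) π) (hW : halfW t₀ = 0) :
    StrictMonoOn (fun t => betaAng 0 t) (Ioc 0 t₀) := by
  refine strictMonoOn_of_deriv_pos (convex_Ioc _ _)
    (continuousOn_betaAng.mono (Ioc_subset_Ioc_right ht₀.2.le)) fun t ht => ?_
  rw [interior_Ioc] at ht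
  have hπ : t < π := ht.2.trans ht₀.2
  have := Real.sin_pos_of_pos_of_lt_pi ht.1 hπ
  have := xi_pos ht.1 hπ.le
  have := halfW_pos_of_lt ht₀ hW ht.1 ht.2
  have := rho_pos t
  rw [deriv_betaAng ht.1 hπ]
  positivity

lemma betaAng_strictAntiOn {t₀ : ℝ} (ht₀ : t₀ ∈ Ioo (π / 2) π) (hW : halfW t₀ = 0) :
    StrictAntiOn (fun t => betaAng 0 t) (Icc t₀ π) := by
  have h0 : 0 < t₀ := by linarith [pi_pos, ht₀.1]
  refine strictAntiOn_of_deriv_neg (convex_Icc _ _)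
    (continuousOn_betaAng.mono (Icc_subset_Ioc_iff ht₀.2.le |>.2 ⟨h0, le_rfl⟩)) fun t ht => ?_
  rw [interior_Icc] at ht
  have ht0 : 0 < t := h0.trans ht.1
  have := Real.sin_pos_of_pos_of_lt_pi ht0 ht.2
  have := xi_pos ht0 ht.2.le
  have := rho_pos t
  rw [deriv_betaAng ht0 ht.2]
  exact div_neg_of_neg_of_pos (mul_neg_of_pos_of_neg (by positivity)
    (halfW_neg_of_gt ht₀ hW ht.1 ht.2)) (by positivity)

lemma betaAng_pi : betaAng 0 π = π / 2 := by
  rw [betaAng_zero_left, arg_eq_pi_div_two_iff, re_deriv_R_div_R, im_deriv_R_div_R]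
  refine ⟨by simp [dxi], div_pos (crossR_pos pi_pos le_rfl) ?_⟩
  have := xi_pos pi_pos le_rfl
  positivity

lemma betaAng_pi_div_two_lt : betaAng 0 (π / 2) < π / 2 := by
  have := xi_pos (by positivity) (by linarith [pi_pos] : π / 2 ≤ π)
  have := rho_pos (π / 2)
  rw [betaAng_zero_left, arg_lt_pi_div_two_iff, re_deriv_R_div_R]
  left
  simp only [Real.cos_pi_div_two, Real.sin_pi_div_two, dxi]
  positivity

theorem beta_monotonicity (tstar : ℝ) (h1 : tstar ∈ Ioo (π/2) π)
    (h2 : W (-tstar) tstar = 0) :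
    StrictMonoOn (fun t => betaAng 0 t) (Ioc 0 tstar) ∧
    StrictAntiOn (fun t => betaAng 0 t) (Icc tstar π) ∧
    betaAng 0 tstar > π/2 ∧
    betaAng 0 π = π/2 ∧
    (∃! tb : ℝ, tb ∈ Ioo 0 tstar ∧ betaAng 0 tb = π/2 ∧
      (∀ t : ℝ, 0 < t → t < tb → betaAng 0 t < π/2) ∧
      (∀ t : ℝ, tb < t → t < π → betaAng 0 t > π/2)) := by
  have hW : halfW tstar = 0 := by linarith [W_neg_self tstar]
  have hmono := betaAng_strictMonoOn h1 hW
  have hanti := betaAng_strictAntiOn h1 hW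
  refine ⟨hmono, hanti, ?_, betaAng_pi, ?_⟩
  · exact betaAng_pi ▸ hanti ⟨le_rfl, h1.2.le⟩ ⟨h1.2.le, le_rfl⟩ h1.2
  · refine existsUnique_eq_of_strictMonoOn_of_strictAntiOn hmono hanti
      ⟨by positivity, h1.1.le⟩ ?_ betaAng_pi_div_two_lt h1.2 betaAng_pi
    exact continuousOn_betaAng.mono (Icc_subset_Ioc (by positivity) h1.2.le)
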